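/- For any classical-state-preserving closed-loop policy, i.e., a sequence of quantum channels γ_t with N_qc ∘ Tr_A ∘ γ_t(ρ) = N_qc(ρ) for all ρ, with state evolution ρ_{t+1} = N(γ_t(ρ_t)) and actions σ_t = γ_t(ρ_t), the occupation operator σ = (1−β)Σ_{t≥0} β^t σ_t satisfies N_qc(Tr_A(σ)) − β N_qc(N(σ)) = (1−β) N_qc(ρ₀). -/

import Mathlib

open Matrix
open scoped Kronecker ComplexOrder

noncomputable section

/-- A density operator: positive semidefinite with unit trace. -/
def IsDensity {n : Type*} [Fintype n] (ρ : Matrix n n ℂ) : Prop :=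
  ρ.PosSemidef ∧ ρ.trace = 1

/-- Partial trace over the second tensor factor. -/
def ptraceA {X A : Type*} [Fintype A] (M : Matrix (X × A) (X × A) ℂ) :
    Matrix X X ℂ :=
  Matrix.of fun x y => ∑ a, M (x, a) (y, a)

/-- A quantum channel given by a Kraus representation. -/
structure KrausChannel (d₁ d₂ : Type*) [Fintype d₁] [DecidableEq d₁] [Fintype d₂] where
  ι : Type
  [fin : Fintype ι]
  K : ι → Matrix d₂ d₁ ℂ
  sum_eq_one : ∑ l : ι, (K l)ᴴ * K l = 1

attribute [instance] KrausChannel.fin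

/-- The action of a Kraus channel on operators. -/
def KrausChannel.apply {d₁ d₂ : Type*} [Fintype d₁] [DecidableEq d₁] [Fintype d₂]
    (C : KrausChannel d₁ d₂) (σ : Matrix d₁ d₁ ℂ) : Matrix d₂ d₂ ℂ :=
  ∑ l : C.ι, C.K l * σ * (C.K l)ᴴ

/-- The quantum-to-classical channel. -/
def Nqc {X : Type*} [Fintype X] [DecidableEq X] (M : Matrix X X ℂ) :
    Matrix X X ℂ :=
  Matrix.diagonal fun x => M x x

/-- The state sequence generated by a closed-loop policy `γ` from `ρ0`. -/
def stateSeqW {X A : Type*} [Fintype X] [DecidableEq X] [Fintype A] [DecidableEq A]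
    (N : KrausChannel (X × A) X) (γ : ℕ → KrausChannel X (X × A))
    (ρ0 : Matrix X X ℂ) : ℕ → Matrix X X ℂ
  | 0 => ρ0
  | t + 1 => N.apply ((γ t).apply (stateSeqW N γ ρ0 t))

/-!
Each action `σ_t = γ_t(ρ_t)` satisfies `N_qc(Tr_A σ_t) = N_qc(ρ_t)` by classical-state
preservation and `N_qc(N σ_t) = N_qc(ρ_{t+1})` by the dynamics, so the linear map
`M ↦ N_qc(Tr_A M) − β N_qc(N M)` sends `β^t σ_t` to `β^t N_qc(ρ_t) − β^{t+1} N_qc(ρ_{t+1})`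
and the discounted series telescopes to `N_qc(ρ₀)`. Moving the map inside the series needs
convergence: all `ρ_t` and `σ_t` are density matrices, whose entries have modulus at most `1`
by the `2 × 2` principal minors, so the series is dominated by a geometric one.
-/

section KrausChannel

variable {d₁ d₂ : Type*} [Fintype d₁] [DecidableEq d₁] [Fintype d₂]

lemma KrausChannel.apply_posSemidef (C : KrausChannel d₁ d₂) {ρ : Matrix d₁ d₁ ℂ}
    (h : ρ.PosSemidef) : (C.apply ρ).PosSemidef :=
  Finset.sum_induction _ _ (fun _ _ ha hb => ha.add hb) Matrix.PosSemidef.zero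
    (fun l _ => h.mul_mul_conjTranspose_same (C.K l))

lemma KrausChannel.trace_apply (C : KrausChannel d₁ d₂) (ρ : Matrix d₁ d₁ ℂ) :
    (C.apply ρ).trace = ρ.trace := by
  rw [KrausChannel.apply, trace_sum,
    Finset.sum_congr rfl fun l _ => trace_mul_cycle (C.K l) ρ (C.K l)ᴴ, ← trace_sum,
    ← Finset.sum_mul, C.sum_eq_one, one_mul]

lemma KrausChannel.isDensity_apply (C : KrausChannel d₁ d₂) {ρ : Matrix d₁ d₁ ℂ}
    (h : IsDensity ρ) : IsDensity (C.apply ρ) :=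
  ⟨C.apply_posSemidef h.1, by rw [C.trace_apply, h.2]⟩

def KrausChannel.applyLinearMap (C : KrausChannel d₁ d₂) :
    Matrix d₁ d₁ ℂ →ₗ[ℂ] Matrix d₂ d₂ ℂ where
  toFun := C.apply
  map_add' M M' := by
    simp [KrausChannel.apply, Matrix.mul_add, Matrix.add_mul, Finset.sum_add_distrib]
  map_smul' c M := by
    simp [KrausChannel.apply, Matrix.mul_smul, Matrix.smul_mul, Finset.smul_sum]

end KrausChannel

def ptraceALinearMap (X A : Type*) [Fintype A] :
    Matrix (X × A) (X × A) ℂ →ₗ[ℂ] Matrix X X ℂ where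
  toFun := ptraceA
  map_add' M M' := by
    ext i j
    simp [ptraceA, Finset.sum_add_distrib]
  map_smul' c M := by
    ext i j
    simp [ptraceA, Finset.mul_sum]

def nqcLinearMap (X : Type*) [Fintype X] [DecidableEq X] : Matrix X X ℂ →ₗ[ℂ] Matrix X X ℂ :=
  diagonalLinearMap X ℂ ℂ ∘ₗ diagLinearMap X ℂ ℂ

lemma nqcLinearMap_apply {X : Type*} [Fintype X] [DecidableEq X] (M : Matrix X X ℂ) :
    nqcLinearMap X M = Nqc M :=
  rfl

lemma Matrix.PosSemidef.norm_apply_sq_le {n : Type*} {A : Matrix n n ℂ} (hA : A.PosSemidef)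
    (i j : n) : ‖A i j‖ ^ 2 ≤ ‖A i i‖ * ‖A j j‖ := by
  have hdet := (hA.submatrix ![i, j]).det_nonneg
  rw [det_fin_two] at hdet
  simp only [submatrix_apply, Matrix.cons_val_zero, Matrix.cons_val_one] at hdet
  rwa [← hA.1.apply j i, Complex.star_def, Complex.mul_conj', ← Complex.ofReal_pow,
    ← Complex.norm_of_nonneg' (hA.diag_nonneg (i := i)),
    ← Complex.norm_of_nonneg' (hA.diag_nonneg (i := j)),
    ← Complex.ofReal_mul, ← Complex.ofReal_sub, Complex.zero_le_real, sub_nonneg] at hdet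

lemma IsDensity.norm_apply_le_one {n : Type*} [Fintype n] {M : Matrix n n ℂ} (h : IsDensity M)
    (i j : n) : ‖M i j‖ ≤ 1 := by
  have hdiag : ∀ k, ‖M k k‖ ≤ 1 := fun k =>
    (CStarAlgebra.norm_le_one_iff_of_nonneg _ h.1.diag_nonneg).mpr <| h.2 ▸
      Finset.single_le_sum (f := fun k => M k k) (fun k _ => h.1.diag_nonneg) (Finset.mem_univ k)
  have hsq : ‖M i j‖ ^ 2 ≤ 1 ^ 2 := calc
    ‖M i j‖ ^ 2 ≤ ‖M i i‖ * ‖M j j‖ := h.1.norm_apply_sq_le i j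
    _ ≤ 1 ^ 2 := by nlinarith [hdiag i, hdiag j, norm_nonneg (M i i), norm_nonneg (M j j)]
  exact (pow_le_pow_iff_left₀ (norm_nonneg _) zero_le_one two_ne_zero).mp hsq

lemma summable_pow_smul_of_isDensity {n : Type*} [Fintype n] {β : ℝ} (hβ0 : 0 ≤ β)
    (hβ1 : β < 1) {M : ℕ → Matrix n n ℂ} (hM : ∀ t, IsDensity (M t)) :
    Summable fun t => β ^ t • M t := by
  refine Pi.summable.mpr fun i => Pi.summable.mpr fun j => ?_
  refine Summable.of_norm_bounded (summable_geometric_of_lt_one hβ0 hβ1) fun t => ?_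
  rw [Matrix.smul_apply, norm_smul, norm_pow, Real.norm_of_nonneg hβ0]
  exact mul_le_of_le_one_right (pow_nonneg hβ0 t) ((hM t).norm_apply_le_one i j)

lemma tsum_pow_smul_sub_smul_succ {E : Type*} [AddCommGroup E] [TopologicalSpace E]
    [IsTopologicalAddGroup E] [T2Space E] [Module ℝ E] {β : ℝ} {a : ℕ → E}
    (h : Summable fun t => β ^ t • a t) :
    ∑' t, β ^ t • (a t - β • a (t + 1)) = a 0 := by
  have hsucc : Summable fun t => β ^ (t + 1) • a (t + 1) := (summable_nat_add_iff 1).mpr h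
  simp only [smul_sub, smul_smul, ← pow_succ]
  rw [h.tsum_sub hsucc, h.tsum_eq_zero_add, pow_zero, one_smul, add_sub_cancel_right]

lemma isDensity_stateSeqW {X A : Type*} [Fintype X] [DecidableEq X] [Fintype A] [DecidableEq A]
    (N : KrausChannel (X × A) X) (γ : ℕ → KrausChannel X (X × A)) {ρ0 : Matrix X X ℂ}
    (hρ0 : IsDensity ρ0) (t : ℕ) : IsDensity (stateSeqW N γ ρ0 t) := by
  induction t with
  | zero => exact hρ0
  | succ t ih => exact N.isDensity_apply ((γ t).isDensity_apply ih)

/-- For a classical-state-preserving closed-loop policy, the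
occupation operator `σ = (1−β)∑ β^t σ_t` satisfies
`N_qc(Tr_A σ) − β N_qc(N σ) = (1−β) N_qc(ρ₀)`. -/
theorem occupation_constraint_closed_loop {X A : Type*}
    [Fintype X] [DecidableEq X] [Fintype A] [DecidableEq A]
    (N : KrausChannel (X × A) X) (β : ℝ) (hβ0 : 0 ≤ β) (hβ1 : β < 1)
    (ρ0 : Matrix X X ℂ) (hρ0 : IsDensity ρ0)
    (γ : ℕ → KrausChannel X (X × A))
    (hγ : ∀ (t : ℕ) (ρ : Matrix X X ℂ), Nqc (ptraceA ((γ t).apply ρ)) = Nqc ρ)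
    (σ : Matrix (X × A) (X × A) ℂ)
    (hσ : σ = (1 - β) •
      ∑' t : ℕ, β ^ t • (γ t).apply (stateSeqW N γ ρ0 t)) :
    Nqc (ptraceA σ) - β • Nqc (N.apply σ) = (1 - β) • Nqc ρ0 := by
  set ρ := stateSeqW N γ ρ0
  let L : Matrix (X × A) (X × A) ℂ →ₗ[ℂ] Matrix X X ℂ :=
    nqcLinearMap X ∘ₗ ptraceALinearMap X A - β • (nqcLinearMap X ∘ₗ N.applyLinearMap)
  have hL : ∀ M, L M = Nqc (ptraceA M) - β • Nqc (N.apply M) := fun _ => rfl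
  have hstep : ∀ t, L ((γ t).apply (ρ t)) = Nqc (ρ t) - β • Nqc (ρ (t + 1)) := fun t => by
    rw [hL, hγ]
    rfl
  have hsumσ : Summable fun t => β ^ t • (γ t).apply (ρ t) :=
    summable_pow_smul_of_isDensity hβ0 hβ1 fun t =>
      (γ t).isDensity_apply (isDensity_stateSeqW N γ hρ0 t)
  have hsumρ : Summable fun t => β ^ t • Nqc (ρ t) := by
    simpa only [Function.comp_def, LinearMap.map_smul_of_tower, nqcLinearMap_apply] using
      (summable_pow_smul_of_isDensity hβ0 hβ1 (isDensity_stateSeqW N γ hρ0)).map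
        (nqcLinearMap X) (nqcLinearMap X).continuous_of_finiteDimensional
  calc Nqc (ptraceA σ) - β • Nqc (N.apply σ)
      = (1 - β) • ∑' t, β ^ t • L ((γ t).apply (ρ t)) := by
        rw [← hL, hσ, LinearMap.map_smul_of_tower,
          hsumσ.map_tsum L L.continuous_of_finiteDimensional]
        simp only [LinearMap.map_smul_of_tower]
    _ = (1 - β) • Nqc ρ0 := by
        simp only [hstep]
        rw [tsum_pow_smul_sub_smul_succ hsumρ]
        rfl
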